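/- Let C, D be categories and F, G: C → D two functors with a natural transformation α: F → G. Suppose there exist functors i: C' → C from a full subcategory and that α restricted to C' is an isomorphism, and every object of C is a colimit of objects of C' preserved by both F and G. Then α is a natural isomorphism. -/

import Mathlib

open CategoryTheory Limits

namespace CategoryTheory.NatTrans

variable {C D J : Type*} [Category C] [Category D] [Category J] {F G : C ⥤ D}

lemma app_pt_eq_isColimit_map (α : F ⟶ G) {K : J ⥤ C} (c : Cocone K)
    (hF : IsColimit (F.mapCocone c)) :
    α.app c.pt = hF.map (G.mapCocone c) (Functor.whiskerLeft K α) :=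
  hF.hom_ext fun j => by
    rw [IsColimit.ι_map]
    simp

lemma isIso_app_pt_of_isColimit_mapCocone (α : F ⟶ G) {K : J ⥤ C} (c : Cocone K)
    (hF : IsColimit (F.mapCocone c)) (hG : IsColimit (G.mapCocone c))
    (hα : ∀ j, IsIso (α.app (K.obj j))) : IsIso (α.app c.pt) := by
  have : ∀ j, IsIso ((Functor.whiskerLeft K α).app j) := hα
  have : IsIso (Functor.whiskerLeft K α) := NatIso.isIso_of_isIso_app _
  rw [app_pt_eq_isColimit_map α c hF]
  exact (IsColimit.coconePointsIsoOfNatIso hF hG (asIso (Functor.whiskerLeft K α))).isIso_hom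

end CategoryTheory.NatTrans

theorem stmt6_general {C C' D : Type*} [Category C] [Category C'] [Category D]
    (i : C' ⥤ C) (F G : C ⥤ D) (α : F ⟶ G)
    (hα : ∀ c' : C', IsIso (α.app (i.obj c')))
    (h : ∀ c : C, ∃ (J : Type) (_ : SmallCategory J) (Dg : J ⥤ C')
        (cc : Cocone (Dg ⋙ i)),
      Nonempty (IsColimit cc) ∧ Nonempty (IsColimit (F.mapCocone cc)) ∧
      Nonempty (IsColimit (G.mapCocone cc)) ∧ Nonempty (cc.pt ≅ c)) :
    IsIso α := by
  suffices ∀ c, IsIso (α.app c) from NatIso.isIso_of_isIso_app α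
  intro c
  obtain ⟨J, _, Dg, cc, -, ⟨hF⟩, ⟨hG⟩, ⟨e⟩⟩ := h c
  rw [← NatTrans.isIso_app_iff_of_iso α e]
  exact NatTrans.isIso_app_pt_of_isColimit_mapCocone α cc hF hG fun j => hα (Dg.obj j)

/-- Let `α : F ⟶ G` be a natural transformation between functors `C ⥤ D` whose components
are isomorphisms on a full subcategory `C' ⊆ C` (given by a fully faithful functor `i`).
If every object of `C` is a colimit of objects of `C'` and these colimits are preserved by
both `F` and `G`, then `α` is a natural isomorphism. -/
theorem stmt6 {C C' D : Type*} [Category C] [Category C'] [Category D]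
    (i : C' ⥤ C) [i.Full] [i.Faithful] (F G : C ⥤ D) (α : F ⟶ G)
    (hα : ∀ c' : C', IsIso (α.app (i.obj c')))
    (h : ∀ c : C, ∃ (J : Type) (_ : SmallCategory J) (Dg : J ⥤ C')
        (cc : Cocone (Dg ⋙ i)),
      Nonempty (IsColimit cc) ∧ Nonempty (IsColimit (F.mapCocone cc)) ∧
      Nonempty (IsColimit (G.mapCocone cc)) ∧ Nonempty (cc.pt ≅ c)) :
    IsIso α :=
  stmt6_general i F G α hα h
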